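/- For every integer k ≥ 3, the satellite graph S_{2k+1} satisfies the ACK property. -/

import Mathlib

/-- Vertices of the satellite graph: the dominating vertex `d = Sum.inl ()`,
the cycle vertices `u i = Sum.inr (Sum.inl i)` and the pendant-type vertices
`w i = Sum.inr (Sum.inr i)`. -/
abbrev SatV (k : ℕ) := Unit ⊕ Fin k ⊕ Fin k

/-- Generating relation for the satellite graph `S_{2k+1}`: `d` is adjacent to every other
vertex, `u_1, …, u_k` form a cycle, and `u_i` is adjacent to `w_i`. -/
def satRel (k : ℕ) : SatV k → SatV k → Prop
  | Sum.inl _, _ => True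
  | Sum.inr (Sum.inl i), Sum.inr (Sum.inl j) => (j : ℕ) = ((i : ℕ) + 1) % k
  | Sum.inr (Sum.inl i), Sum.inr (Sum.inr j) => i = j
  | _, _ => False

/-- The satellite graph `S_{2k+1}` on `2k+1` vertices. -/
def satGraph (k : ℕ) : SimpleGraph (SatV k) := SimpleGraph.fromRel (satRel k)

noncomputable instance (k : ℕ) : DecidableRel (satGraph k).Adj := Classical.decRel _


/-- A graph `G` satisfies the ACK property if there is a nonzero `{0,1}`-vector in the row
space of its adjacency matrix `A_G` (over `ℝ`) that is not equal to any row of `A_G`. -/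
def AckProp {V : Type} [Fintype V] (G : SimpleGraph V) [DecidableRel G.Adj] : Prop :=
  ∃ y : V → ℝ, y ≠ 0 ∧ (∀ v, y v = 0 ∨ y v = 1) ∧
    y ∈ Submodule.span ℝ (Set.range fun i => (G.adjMatrix ℝ) i) ∧
    ∀ i, y ≠ (G.adjMatrix ℝ) i

/-! Write `A` for the adjacency matrix. Since `N(u₁) = {d, u₀, u₂, w₁}` (the cycle has
length `k ≥ 3`, so `u₀, u₁, u₂` are distinct) and `N(wᵢ) = {d, uᵢ}`, the rows satisfy
`A(u₁) + A(w₁) - A(w₀) - A(w₂) = 1_{u₁, w₁}`. This `{0,1}`-vector is no row: it vanishes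
at `d`, which is adjacent to every other vertex, while the row of `d` is supported on all
`2k ≥ 4` other vertices. -/

namespace SimpleGraph

variable {V : Type} (G : SimpleGraph V) [DecidableRel G.Adj]

theorem adjMatrix_row_eq_indicator (v : V) :
    G.adjMatrix ℝ v = (G.neighborSet v).indicator 1 := by
  ext w
  simp [adjMatrix_apply, Set.indicator_apply]

theorem ackProp_of_indicator_mem_span [Fintype V] (s : Set V) (hs : s.Nonempty)
    (hspan : s.indicator 1 ∈ Submodule.span ℝ (Set.range fun v => G.adjMatrix ℝ v))
    (hrow : ∀ v, s ≠ G.neighborSet v) : AckProp G := by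
  refine ⟨s.indicator 1, ?_, fun v => ?_, hspan, fun v hv => hrow v ?_⟩
  · obtain ⟨x, hx⟩ := hs
    exact fun h => one_ne_zero (α := ℝ) (by simpa [hx] using congrFun h x)
  · by_cases hv : v ∈ s <;> simp [hv]
  · exact Set.indicator_one_inj ℝ (hv.trans (G.adjMatrix_row_eq_indicator v))

end SimpleGraph

theorem Set.indicator_pair {V : Type} [DecidableEq V] {a b : V} (hab : a ≠ b) :
    ({a, b} : Set V).indicator (1 : V → ℝ) = Pi.single a 1 + Pi.single b 1 := by
  rw [Set.insert_eq, Set.indicator_union_of_disjoint (Set.disjoint_singleton.mpr hab)]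
  simp only [Set.indicator_singleton]
  rfl

theorem Nat.add_one_mod_eq_ite {m k : ℕ} (h : m < k) :
    (m + 1) % k = if m + 1 = k then 0 else m + 1 := by
  split_ifs with hk
  · rw [hk, Nat.mod_self]
  · exact Nat.mod_eq_of_lt (by omega)

namespace SatV

variable {k : ℕ}

abbrev d : SatV k := Sum.inl ()
abbrev u (i : Fin k) : SatV k := Sum.inr (Sum.inl i)
abbrev w (i : Fin k) : SatV k := Sum.inr (Sum.inr i)

end SatV

open SatV

section

variable {k : ℕ}

@[simp] lemma satGraph_adj_inl_inr (a : Unit) (x : Fin k ⊕ Fin k) :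
    (satGraph k).Adj (Sum.inl a) (Sum.inr x) := by
  simp [satGraph, satRel]

@[simp] lemma satGraph_adj_inr_inl (x : Fin k ⊕ Fin k) (a : Unit) :
    (satGraph k).Adj (Sum.inr x) (Sum.inl a) := by
  simp [satGraph, satRel]

lemma satGraph_adj_u_u (i j : Fin k) :
    (satGraph k).Adj (u i) (u j) ↔ i ≠ j ∧ ((j : ℕ) = i + 1 ∨ (i : ℕ) = j + 1 ∨
      (i + 1 = k ∧ (j : ℕ) = 0) ∨ (j + 1 = k ∧ (i : ℕ) = 0)) := by
  simp only [satGraph, satRel, SimpleGraph.fromRel_adj, ne_eq, Sum.inr.injEq, Sum.inl.injEq,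
    Nat.add_one_mod_eq_ite i.isLt, Nat.add_one_mod_eq_ite j.isLt]
  split_ifs <;> omega

@[simp] lemma satGraph_adj_u_w (i j : Fin k) : (satGraph k).Adj (u i) (w j) ↔ i = j := by
  simp [satGraph, satRel]

@[simp] lemma satGraph_adj_w_u (i j : Fin k) : (satGraph k).Adj (w i) (u j) ↔ i = j := by
  simp [satGraph, satRel, eq_comm]

@[simp] lemma satGraph_not_adj_w_w (i j : Fin k) : ¬ (satGraph k).Adj (w i) (w j) := by
  simp [satGraph, satRel]

lemma satGraph_adjMatrix_w (i : Fin k) :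
    (satGraph k).adjMatrix ℝ (w i) = Pi.single d 1 + Pi.single (u i) 1 := by
  funext v
  rcases v with _ | j | j <;> simp [SimpleGraph.adjMatrix_apply, Pi.single_apply, eq_comm]

lemma satGraph_adj_u_one_u {n : ℕ} (j : Fin (n + 3)) :
    (satGraph (n + 3)).Adj (u 1) (u j) ↔ j = 0 ∨ j = 2 := by
  simp only [satGraph_adj_u_u, ne_eq, Fin.ext_iff, Fin.val_zero, Fin.val_one, Fin.val_two]
  omega

lemma satGraph_adjMatrix_u_one (n : ℕ) :
    (satGraph (n + 3)).adjMatrix ℝ (u 1) =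
      Pi.single d 1 + Pi.single (u 0) 1 + Pi.single (u 2) 1 + Pi.single (w 1) 1 := by
  funext v
  rcases v with _ | j | j
  · simp [SimpleGraph.adjMatrix_apply]
  · have h02 : (0 : Fin (n + 3)) ≠ 2 := by
      simp only [ne_eq, Fin.ext_iff, Fin.val_zero, Fin.val_two]
      omega
    simp only [SimpleGraph.adjMatrix_apply, satGraph_adj_u_one_u, Pi.add_apply, Pi.single_apply,
      Sum.inr.injEq, Sum.inl.injEq, reduceCtorEq, if_false, zero_add, add_zero]
    by_cases h0 : j = 0 <;> simp [h0, h02]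
  · simp [SimpleGraph.adjMatrix_apply, Pi.single_apply, eq_comm]

lemma satGraph_pair_ne_neighborSet (hk : 2 ≤ k) (i : Fin k) (v : SatV k) :
    ({u i, w i} : Set (SatV k)) ≠ (satGraph k).neighborSet v := by
  intro h
  rcases v with a | x
  · have : Nontrivial (Fin k) := Fin.nontrivial_iff_two_le.mpr hk
    obtain ⟨j, hj⟩ := exists_ne i
    have hj_mem : u j ∈ (satGraph k).neighborSet (Sum.inl a) := by simp
    rw [← h] at hj_mem
    simp [hj] at hj_mem
  · have hd_mem : d ∈ (satGraph k).neighborSet (Sum.inr x) := by simp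
    rw [← h] at hd_mem
    simp at hd_mem

end

lemma satGraph_indicator_eq (n : ℕ) :
    ({u 1, w 1} : Set (SatV (n + 3))).indicator 1 =
      (satGraph (n + 3)).adjMatrix ℝ (u 1) + (satGraph (n + 3)).adjMatrix ℝ (w 1)
        - (satGraph (n + 3)).adjMatrix ℝ (w 0) - (satGraph (n + 3)).adjMatrix ℝ (w 2) := by
  rw [Set.indicator_pair (by simp), satGraph_adjMatrix_u_one, satGraph_adjMatrix_w,
    satGraph_adjMatrix_w, satGraph_adjMatrix_w]
  abel

theorem satGraph_ackProp (k : ℕ) (hk : 3 ≤ k) : AckProp (satGraph k) := by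
  obtain ⟨n, rfl⟩ : ∃ n, k = n + 3 := ⟨k - 3, by omega⟩
  have row_mem (v : SatV (n + 3)) : (satGraph (n + 3)).adjMatrix ℝ v ∈
      Submodule.span ℝ (Set.range fun v => (satGraph (n + 3)).adjMatrix ℝ v) :=
    Submodule.subset_span ⟨v, rfl⟩
  refine (satGraph (n + 3)).ackProp_of_indicator_mem_span {u 1, w 1} (Set.insert_nonempty _ _)
    ?_ (satGraph_pair_ne_neighborSet (by omega) 1)
  rw [satGraph_indicator_eq]
  exact sub_mem (sub_mem (add_mem (row_mem _) (row_mem _)) (row_mem _)) (row_mem _)
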